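/- arXiv:0803.3405 — 2 statements merged into one kernel-verified Lean document; each statement's English description precedes it below -/
import Mathlib

section
/- Let G be a topological group and Δ a continuous right-invariant pseudometric on G with d(Δ) > ℵ₀. Then d(Δ) = lim_{k→∞} Δ♭(kΔ), i.e., d(Δ) is the supremum of the nondecreasing sequence of cardinals Δ♭(kΔ). -/
open Cardinal Topology

universe u

/-- `Δ` is a pseudometric: vanishes on the diagonal, symmetric, triangle inequality. -/
def IsPseudometric {G : Type u} (Δ : G → G → ℝ) : Prop :=
  (∀ x, Δ x x = 0) ∧ (∀ x y, Δ x y = Δ y x) ∧ (∀ x y z, Δ x z ≤ Δ x y + Δ y z)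

/-- Right invariance of a pseudometric on a group. -/
def RightInvariant {G : Type u} [Group G] (Δ : G → G → ℝ) : Prop :=
  ∀ z z' x, Δ (z * x) (z' * x) = Δ z z'

/-- `BLip⁺(Δ)`: [0,1]-valued functions that are 1-Lipschitz for `Δ`. -/
def BLip {G : Type u} (Δ : G → G → ℝ) : Set (G → ℝ) :=
  {f | (∀ x, 0 ≤ f x ∧ f x ≤ 1) ∧ ∀ x y, |f x - f y| ≤ Δ x y}

/-- Right translation `(x·f)(z) = f(zx)`. -/
def rtrans {G : Type u} [Group G] (x : G) (f : G → ℝ) : G → ℝ := fun z => f (z * x)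

/-- The right orbit of `f`. -/
def rorbit {G : Type u} [Group G] (f : G → ℝ) : Set (G → ℝ) := {g | ∃ x : G, g = rtrans x f}

/-- A continuous right-invariant pseudometric on a topological group. -/
def IsCRIP {G : Type u} [Group G] [TopologicalSpace G] (Δ : G → G → ℝ) : Prop :=
  IsPseudometric Δ ∧ RightInvariant Δ ∧ Continuous fun p : G × G => Δ p.1 p.2

/-- `d(Δ)`: least cardinality of a `Δ`-dense subset of `G`. -/
noncomputable def dDens {G : Type u} (Δ : G → G → ℝ) : Cardinal.{u} :=
  sInf {c | ∃ H : Set G, (∀ x : G, ∀ ε : ℝ, 0 < ε → ∃ h ∈ H, Δ x h < ε) ∧ c = Cardinal.mk H}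

/-- `η♯(Δ)`: least cardinality of `P ⊆ G` with `G = ⋃_{p ∈ P} {x | Δ(p,x) ≤ 1}`. -/
noncomputable def etaSharp {G : Type u} (Δ : G → G → ℝ) : Cardinal.{u} :=
  sInf {c | ∃ P : Set G, (∀ x : G, ∃ p ∈ P, Δ p x ≤ 1) ∧ c = Cardinal.mk P}

/-- `Δ♭(Δ)`: least cardinality of `P ⊆ G` admitting a finite `Q ⊆ G` with
`G = ⋃_{q ∈ Q} ⋃_{p ∈ P} {x | Δ(p, qx) ≤ 1}`. -/
noncomputable def deltaFlat {G : Type u} [Group G] (Δ : G → G → ℝ) : Cardinal.{u} :=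
  sInf {c | ∃ P : Set G,
    (∃ Q : Set G, Q.Finite ∧ ∀ x : G, ∃ q ∈ Q, ∃ p ∈ P, Δ p (q * x) ≤ 1) ∧
    c = Cardinal.mk P}

/-- Bounded right uniformly continuous real function on a topological group
(the right uniformity being generated by continuous right-invariant pseudometrics). -/
def BddRUC {G : Type u} [Group G] [TopologicalSpace G] (f : G → ℝ) : Prop :=
  (∃ C : ℝ, ∀ x, |f x| ≤ C) ∧
  ∀ ε : ℝ, 0 < ε → ∃ Δ : G → G → ℝ, IsCRIP Δ ∧
    ∃ δ : ℝ, 0 < δ ∧ ∀ x y, Δ x y < δ → |f x - f y| < ε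

/-- `G` is ambitable: every `BLip⁺(Δ)` is contained in the pointwise closure of the
right orbit of some bounded right uniformly continuous function. -/
def Ambitable (G : Type u) [Group G] [TopologicalSpace G] : Prop :=
  ∀ Δ : G → G → ℝ, IsCRIP Δ →
    ∃ f : G → ℝ, BddRUC f ∧ BLip Δ ⊆ closure (rorbit f)

/-- `G` is precompact: every continuous right-invariant pseudometric admits finite
`ε`-dense sets. -/
def PrecompactGrp (G : Type u) [Group G] [TopologicalSpace G] : Prop :=
  ∀ Δ : G → G → ℝ, IsCRIP Δ → ∀ ε : ℝ, 0 < ε →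
    ∃ F : Set G, F.Finite ∧ ∀ x : G, ∃ p ∈ F, Δ x p < ε

/-- `G` is `κ`-bounded: every neighbourhood `U` of the identity admits `H` with
`|H| ≤ κ` and `U * H = G`. -/
def KBounded (G : Type u) [Group G] [TopologicalSpace G] (κ : Cardinal.{u}) : Prop :=
  ∀ U ∈ nhds (1 : G), ∃ H : Set G, Cardinal.mk H ≤ κ ∧
    ∀ x : G, ∃ u ∈ U, ∃ h ∈ H, x = u * h

/-- `G` is locally `κ`-bounded: the identity has a neighbourhood `U` such that for each
continuous right-invariant pseudometric `Δ` there is a `Δ`-dense subset `H` of `U`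
with `|H| ≤ κ`. -/
def LocallyKBounded (G : Type u) [Group G] [TopologicalSpace G] (κ : Cardinal.{u}) : Prop :=
  ∃ U ∈ nhds (1 : G), ∀ Δ : G → G → ℝ, IsCRIP Δ →
    ∃ H : Set G, H ⊆ U ∧ Cardinal.mk H ≤ κ ∧
      ∀ x ∈ U, ∀ ε : ℝ, 0 < ε → ∃ h ∈ H, Δ x h < ε


/-!
B. H. Neumann's argument: a cover of `G` by finitely many translates `q⁻¹ · N₁(P)` can be
shrunk one translate at a time. If `P` is not a `2`-net, pick `g` at distance `> 2` from `P`.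
When `q₀⁻¹ · N₁(P)` covers `x` through `c ∈ P`, right invariance turns the cover of `x c⁻¹ g`
into a cover of `x` by another translate of `N₁(P ∪ P g⁻¹ P)` (were it `q₀⁻¹ · N₁(P)` again,
`g` would be within `2` of `P`), and `P ∪ P g⁻¹ P` keeps any infinite bound on `|P|`.
Hence `Δ♭(kΔ) ≤ κ` for all `k` yields `2/k`-nets of size `κ`, so
`d(Δ) ≤ max (sup_k Δ♭(kΔ)) ℵ₀`; the reverse bound takes `Q = {1}`.
-/

open Set

namespace Cardinal

variable {α : Type u} {κ : Cardinal.{u}}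

theorem mk_union_image2_le (hκ : ℵ₀ ≤ κ) (f : α → α → α) {P : Set α} (hP : #P ≤ κ) :
    #(P ∪ image2 f P P : Set α) ≤ κ :=
  calc #(P ∪ image2 f P P : Set α) ≤ #P + #P * #P :=
        (mk_union_le _ _).trans (add_le_add_right mk_image2_le _)
    _ ≤ κ + κ * κ := by gcongr
    _ = κ := by rw [mul_eq_self hκ, add_eq_self hκ]

theorem mk_iUnion_nat_le (hκ : ℵ₀ ≤ κ) {f : ℕ → Set α} (hf : ∀ n, #(f n) ≤ κ) :
    #(⋃ n, f n) ≤ κ := by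
  rw [← lift_le.{0}]
  calc lift.{0} #(⋃ n, f n) ≤ lift.{u} #ℕ * ⨆ n, lift.{0} #(f n) := mk_iUnion_le_lift f
    _ ≤ lift.{0} κ * lift.{0} κ := by
        gcongr
        · simpa using hκ
        · exact ciSup_le fun n => lift_le.2 (hf n)
    _ = lift.{0} κ := mul_eq_self (by simpa using hκ)

end Cardinal

section Pseudometric

variable {G : Type u} {Δ : G → G → ℝ}

theorem IsPseudometric.nonneg (hΔ : IsPseudometric Δ) (x y : G) : 0 ≤ Δ x y := by
  obtain ⟨h0, hsymm, htri⟩ := hΔ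
  have := htri x y x
  rw [h0, hsymm y x] at this
  linarith

theorem IsPseudometric.const_mul (hΔ : IsPseudometric Δ) {c : ℝ} (hc : 0 ≤ c) :
    IsPseudometric fun x y => c * Δ x y := by
  obtain ⟨h0, hsymm, htri⟩ := hΔ
  refine ⟨fun x => by simp [h0], fun x y => congrArg (c * ·) (hsymm x y), fun x y z => ?_⟩
  rw [← mul_add]
  exact mul_le_mul_of_nonneg_left (htri x y z) hc

theorem RightInvariant.const_mul [Group G] (hΔ : RightInvariant Δ) (c : ℝ) :
    RightInvariant fun x y => c * Δ x y := fun z z' x => by simp only [hΔ z z' x]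

theorem RightInvariant.apply_mul_right [Group G] (hΔ : RightInvariant Δ) (x y z : G) :
    Δ x (y * z) = Δ (x * z⁻¹) y := by
  rw [← hΔ (x * z⁻¹) y z, inv_mul_cancel_right]

end Pseudometric

section Density

variable {G : Type u} {Δ : G → G → ℝ}

theorem exists_mk_eq_dDens (h0 : ∀ x, Δ x x = 0) :
    ∃ H : Set G, (∀ x : G, ∀ ε : ℝ, 0 < ε → ∃ h ∈ H, Δ x h < ε) ∧ #H = dDens Δ := by
  obtain ⟨H, hH, hcard⟩ : dDens Δ ∈ _ := csInf_mem
    ⟨_, univ, fun x ε hε => ⟨x, mem_univ x, by rwa [h0]⟩, rfl⟩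
  exact ⟨H, hH, hcard.symm⟩

theorem exists_mk_eq_deltaFlat [Group G] (h1 : ∀ x, Δ x x ≤ 1) :
    ∃ P : Set G, (∃ Q : Set G, Q.Finite ∧ ∀ x : G, ∃ q ∈ Q, ∃ p ∈ P, Δ p (q * x) ≤ 1) ∧
      #P = deltaFlat Δ := by
  obtain ⟨P, hP, hcard⟩ : deltaFlat Δ ∈ _ := csInf_mem
    ⟨_, univ, ⟨{1}, finite_singleton 1, fun x => ⟨1, rfl, x, mem_univ x, by simpa using h1 x⟩⟩,
      rfl⟩
  exact ⟨P, hP, hcard.symm⟩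

theorem deltaFlat_mono [Group G] {Δ' : G → G → ℝ} (h1 : ∀ x, Δ' x x ≤ 1)
    (hle : ∀ x y, Δ x y ≤ Δ' x y) : deltaFlat Δ ≤ deltaFlat Δ' := by
  obtain ⟨P, ⟨Q, hQ, hcov⟩, hP⟩ := exists_mk_eq_deltaFlat h1
  refine hP ▸ csInf_le' ⟨P, ⟨Q, hQ, fun x => ?_⟩, rfl⟩
  obtain ⟨q, hq, p, hp, hpq⟩ := hcov x
  exact ⟨q, hq, p, hp, (hle _ _).trans hpq⟩

theorem deltaFlat_const_mul_le_dDens [Group G] (hΔ : IsPseudometric Δ) {c : ℝ} (hc : 0 < c) :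
    deltaFlat (fun x y => c * Δ x y) ≤ dDens Δ := by
  obtain ⟨H, hH, hcard⟩ := exists_mk_eq_dDens hΔ.1
  refine hcard ▸ csInf_le' ⟨H, ⟨{1}, finite_singleton 1, fun x => ?_⟩, rfl⟩
  obtain ⟨h, hh, hxh⟩ := hH x (1 / c) (by positivity)
  refine ⟨1, rfl, h, hh, ?_⟩
  show c * Δ h (1 * x) ≤ 1
  rw [one_mul, hΔ.2.1]
  exact ((lt_div_iff₀' hc).1 hxh).le

theorem dDens_le_of_forall_exists_net {κ : Cardinal.{u}} (hκ : ℵ₀ ≤ κ)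
    (hnet : ∀ ε > 0, ∃ H : Set G, #H ≤ κ ∧ ∀ x, ∃ h ∈ H, Δ x h < ε) : dDens Δ ≤ κ := by
  choose H hcard hH using fun n : ℕ => hnet (1 / (n + 1)) (by positivity)
  refine le_trans (b := #(⋃ n, H n)) (csInf_le' ⟨_, fun x ε hε => ?_, rfl⟩)
    (Cardinal.mk_iUnion_nat_le hκ hcard)
  obtain ⟨n, hn⟩ := exists_nat_one_div_lt hε
  obtain ⟨h, hh, hxh⟩ := hH n x
  exact ⟨h, mem_iUnion_of_mem n hh, hxh.trans hn⟩

end Density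

section Neumann

variable {G : Type u} [Group G] {Δ : G → G → ℝ}

theorem exists_cover_of_cover_insert_of_far (hΔ : IsPseudometric Δ) (hri : RightInvariant Δ)
    {q₀ g : G} {Q P : Set G} (hcov : ∀ x, ∃ q ∈ insert q₀ Q, ∃ p ∈ P, Δ p (q * x) ≤ 1)
    (hg : ∀ c ∈ P, 2 < Δ g c) :
    ∀ x, ∃ q ∈ Q, ∃ p ∈ P ∪ image2 (fun p c => p * (g⁻¹ * c)) P P, Δ p (q * x) ≤ 1 := by
  obtain ⟨-, hsymm, htri⟩ := hΔ
  intro x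
  obtain ⟨q, hq, c, hc, hcx⟩ := hcov x
  rcases eq_or_ne q q₀ with rfl | hq₀
  · obtain ⟨q₁, hq₁, p, hp, hpx⟩ := hcov (x * (c⁻¹ * g))
    rw [← mul_assoc, hri.apply_mul_right, mul_inv_rev, inv_inv] at hpx
    rcases eq_or_ne q₁ q with rfl | hne
    · have hpg : Δ p g ≤ 2 := by
        rw [← hri p g (g⁻¹ * c), mul_inv_cancel_left]
        linarith [htri (p * (g⁻¹ * c)) (q₁ * x) c, hsymm (q₁ * x) c]
      linarith [hg p hp, hsymm g p]
    · exact ⟨q₁, hq₁.resolve_left hne, _, Or.inr (mem_image2_of_mem hp hc), hpx⟩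
  · exact ⟨q, hq.resolve_left hq₀, c, Or.inl hc, hcx⟩

theorem exists_two_net_of_cover (hΔ : IsPseudometric Δ) (hri : RightInvariant Δ)
    {κ : Cardinal.{u}} (hκ : ℵ₀ ≤ κ) {Q : Set G} (hQ : Q.Finite) :
    ∀ P : Set G, #P ≤ κ → (∀ x, ∃ q ∈ Q, ∃ p ∈ P, Δ p (q * x) ≤ 1) →
      ∃ H : Set G, #H ≤ κ ∧ ∀ x, ∃ h ∈ H, Δ x h ≤ 2 := by
  induction Q, hQ using Set.Finite.induction_on with
  | empty =>
    intro P _ hcov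
    obtain ⟨q, hq, -⟩ := hcov 1
    exact absurd hq (notMem_empty q)
  | @insert q₀ Q _ _ ih =>
    intro P hP hcov
    by_cases hnet : ∀ x, ∃ h ∈ P, Δ x h ≤ 2
    · exact ⟨P, hP, hnet⟩
    push Not at hnet
    obtain ⟨g, hg⟩ := hnet
    exact ih _ (Cardinal.mk_union_image2_le hκ _ hP)
      (exists_cover_of_cover_insert_of_far hΔ hri hcov hg)

theorem dDens_le_of_forall_deltaFlat_le (hΔ : IsPseudometric Δ) (hri : RightInvariant Δ)
    {κ : Cardinal.{u}} (hκ : ℵ₀ ≤ κ)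
    (hflat : ∀ k : ℕ, deltaFlat (fun x y => ((k : ℝ) + 1) * Δ x y) ≤ κ) : dDens Δ ≤ κ := by
  refine dDens_le_of_forall_exists_net hκ fun ε hε => ?_
  obtain ⟨k, hk⟩ := exists_nat_one_div_lt (half_pos hε)
  have hk₀ : (0 : ℝ) < k + 1 := by positivity
  have hkΔ := hΔ.const_mul hk₀.le
  obtain ⟨P, ⟨Q, hQ, hcov⟩, hP⟩ := exists_mk_eq_deltaFlat
    (Δ := fun x y => ((k : ℝ) + 1) * Δ x y) fun x => (hkΔ.1 x).trans_le zero_le_one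
  obtain ⟨H, hH, hnet⟩ :=
    exists_two_net_of_cover hkΔ (hri.const_mul _) hκ hQ P (hP ▸ hflat k) hcov
  refine ⟨H, hH, fun x => ?_⟩
  obtain ⟨h, hh, hxh⟩ := hnet x
  refine ⟨h, hh, ?_⟩
  rw [← le_div_iff₀' hk₀] at hxh
  linarith [show 2 / ((k : ℝ) + 1) = 2 * (1 / (k + 1)) by ring]

end Neumann

theorem dDens_eq_limit_deltaFlat_general {G : Type u} [Group G] [TopologicalSpace G]
    (Δ : G → G → ℝ) (hΔ : IsCRIP Δ)
    (hd : Cardinal.aleph0 < dDens Δ) :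
    (∀ j k : ℕ, j ≤ k →
      deltaFlat (fun x y => ((j : ℝ) + 1) * Δ x y) ≤
        deltaFlat (fun x y => ((k : ℝ) + 1) * Δ x y)) ∧
    dDens Δ = ⨆ k : ℕ, deltaFlat (fun x y => ((k : ℝ) + 1) * Δ x y) := by
  obtain ⟨hpm, hri, -⟩ := hΔ
  have hflat_le (k : ℕ) : deltaFlat (fun x y => ((k : ℝ) + 1) * Δ x y) ≤ dDens Δ :=
    deltaFlat_const_mul_le_dDens hpm (by positivity)
  refine ⟨fun j k hjk => deltaFlat_mono (fun x => by simp [hpm.1 x]) fun x y => ?_,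
    le_antisymm ?_ (ciSup_le hflat_le)⟩
  · gcongr
    exact hpm.nonneg x y
  · have hbdd : BddAbove (range fun k : ℕ => deltaFlat (fun x y => ((k : ℝ) + 1) * Δ x y)) :=
      ⟨dDens Δ, forall_mem_range.2 hflat_le⟩
    have hle := dDens_le_of_forall_deltaFlat_le hpm hri (le_max_right _ ℵ₀)
      fun k => (le_ciSup hbdd k).trans (le_max_left _ _)
    exact (le_max_iff.1 hle).resolve_right hd.not_ge

/-- if `d(Δ) > ℵ₀` then `d(Δ) = lim_k Δ♭(kΔ)`, the supremum of the
nondecreasing sequence `Δ♭(kΔ)`. -/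
theorem dDens_eq_limit_deltaFlat {G : Type u} [Group G] [TopologicalSpace G]
    [IsTopologicalGroup G] (Δ : G → G → ℝ) (hΔ : IsCRIP Δ)
    (hd : Cardinal.aleph0 < dDens Δ) :
    (∀ j k : ℕ, j ≤ k →
      deltaFlat (fun x y => ((j : ℝ) + 1) * Δ x y) ≤
        deltaFlat (fun x y => ((k : ℝ) + 1) * Δ x y)) ∧
    dDens Δ = ⨆ k : ℕ, deltaFlat (fun x y => ((k : ℝ) + 1) * Δ x y) :=
  dDens_eq_limit_deltaFlat_general Δ hΔ hd
end

section
/- Let G be a topological group, Δ a continuous right-invariant pseudometric on G with Δ♭(Δ) ≥ ℵ₀. If 𝒪 is a family of non-empty open subsets of BLip⁺(Δ) (with the pointwise topology) and |𝒪| ≤ Δ♭(Δ), then there exists f ∈ BLip⁺(Δ) whose right orbit { x·f | x ∈ G } intersects every set in 𝒪. -/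
open Cardinal Topology

universe u

/-!
Each `U ∈ 𝒪` contains some `g_U ∈ BLip⁺(Δ)` with a finite set `F_U ⊆ G` such that every
member of `BLip⁺(Δ)` agreeing with `g_U` on `F_U` lies in `U`. Listing `𝒪` in order type at
most `Δ♭(Δ)`, a transfinite recursion chooses `x_U ∈ G` making the translates `F_U x_U`
pairwise more than `1` apart: at each stage fewer than `Δ♭(Δ)` points have been used, and by
the definition of `Δ♭(Δ)` their unit balls cannot catch a translate of every point of `F_U`.
The values `g_U(p)` prescribed at the points `p x_U` are then `1`-Lipschitz (by right
invariance within one `U`, by the separation across different ones), so a McShane extension,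
clamped to `[0, 1]`, is an `f` with `x_U · f = g_U` on `F_U`.
-/
open Set

theorem IsOpen.exists_finset_forall_eqOn_mem {α β : Type*} [TopologicalSpace β]
    {V : Set (α → β)} (hV : IsOpen V) {g : α → β} (hg : g ∈ V) :
    ∃ F : Finset α, ∀ h, EqOn h g F → h ∈ V := by
  obtain ⟨F, u, hu, hsub⟩ := isOpen_pi_iff.mp hV g hg
  exact ⟨F, fun h hh => hsub fun i hi => hh hi ▸ (hu i hi).2⟩

theorem rtrans_mem_BLip {G : Type u} [Group G] {Δ : G → G → ℝ} (hinv : RightInvariant Δ)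
    {f : G → ℝ} (hf : f ∈ BLip Δ) (x : G) : rtrans x f ∈ BLip Δ :=
  ⟨fun z => hf.1 (z * x), fun z w => hinv z w x ▸ hf.2 (z * x) (w * x)⟩

theorem exists_mem_BLip_comp_eq {α K : Type*} {Δ : α → α → ℝ} (hΔ : IsPseudometric Δ)
    (a : K → α) (v : K → ℝ) (hv : ∀ k, v k ∈ Icc 0 1)
    (hlip : ∀ k l, |v k - v l| ≤ Δ (a k) (a l)) :
    ∃ f ∈ BLip Δ, f ∘ a = v := by
  obtain ⟨hzero, hsymm, htri⟩ := hΔ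
  let _ : PseudoMetricSpace α :=
    { dist := Δ, dist_self := hzero, dist_comm := hsymm, dist_triangle := htri }
  have hfac : v.FactorsThrough a := fun k l hkl =>
    sub_eq_zero.mp (abs_nonpos_iff.mp (by simpa [hkl, hzero] using hlip k l))
  have hext : LipschitzOnWith 1 (Function.extend a v 0) (range a) := by
    refine LipschitzOnWith.of_dist_le_mul ?_
    rintro _ ⟨k, rfl⟩ _ ⟨l, rfl⟩
    rw [hfac.extend_apply, hfac.extend_apply, NNReal.coe_one, one_mul, Real.dist_eq]
    exact hlip k l
  obtain ⟨g, hg, hgv⟩ := hext.extend_real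
  have hclamp : LipschitzWith 1 fun z => max 0 (min 1 (g z)) :=
    (hg.const_min 1).const_max 0
  refine ⟨fun z => max 0 (min 1 (g z)), ⟨fun z => ⟨le_max_left _ _, ?_⟩, fun z w => ?_⟩, ?_⟩
  · exact max_le zero_le_one (min_le_left _ _)
  · have := hclamp.dist_le_mul z w
    rw [NNReal.coe_one, one_mul, Real.dist_eq] at this
    exact this
  · funext k
    have := hgv ⟨k, rfl⟩
    simp only [hfac.extend_apply] at this
    simp [← this, (hv k).1, (hv k).2]

theorem mk_iUnion_lt_of_finite {ι α : Type u} {S : ι → Set α} (hS : ∀ i, (S i).Finite)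
    {κ : Cardinal.{u}} (hκ : ℵ₀ ≤ κ) (hι : #ι < κ) : #(⋃ i, S i) < κ := by
  rcases finite_or_infinite ι with hfin | hinf
  · exact (finite_iUnion hS).lt_aleph0.trans_le hκ
  · calc #(⋃ i, S i) ≤ #ι * ⨆ i, #(S i) := mk_iUnion_le S
      _ ≤ #ι * ℵ₀ := by gcongr; exact ciSup_le' fun i => (hS i).lt_aleph0.le
      _ = #ι := mul_aleph0_eq (infinite_iff.mp hinf)
      _ < κ := hι

theorem exists_one_lt_of_mk_lt_deltaFlat {G : Type u} [Group G] {Δ : G → G → ℝ}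
    (Q : Finset G) {s : Set G} (hs : #s < deltaFlat Δ) :
    ∃ x : G, ∀ q ∈ Q, ∀ c ∈ s, 1 < Δ c (q * x) := by
  by_contra! hcover
  exact hs.not_ge (csInf_le' ⟨s, ⟨Q, Q.finite_toSet, hcover⟩, rfl⟩)

theorem exists_separated_translates_of_wellFoundedLT {ι G : Type u} [LinearOrder ι]
    [WellFoundedLT ι] [Group G] {Δ : G → G → ℝ} (F : ι → Finset G)
    (hbig : ℵ₀ ≤ deltaFlat Δ) (hsmall : ∀ i : ι, #(Iio i) < deltaFlat Δ) :
    ∃ x : ι → G, ∀ i, ∀ j < i, ∀ p ∈ F i, ∀ q ∈ F j, 1 < Δ (q * x j) (p * x i) := by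
  have hstep : ∀ i (y : ∀ j, j < i → G), ∃ xi : G,
      ∀ p ∈ F i, ∀ j (hj : j < i), ∀ q ∈ F j, 1 < Δ (q * y j hj) (p * xi) := by
    intro i y
    have hprior := mk_iUnion_lt_of_finite
      (S := fun j : Iio i => (fun q => q * y j j.2) '' (F j : Set G))
      (fun j => (F j).finite_toSet.image _) hbig (hsmall i)
    obtain ⟨xi, hxi⟩ := exists_one_lt_of_mk_lt_deltaFlat (F i) hprior
    exact ⟨xi, fun p hp j hj q hq => hxi p hp _ (mem_iUnion.mpr ⟨⟨j, hj⟩, q, hq, rfl⟩)⟩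
  choose sel hsel using hstep
  let x : ι → G := wellFounded_lt.fix sel
  refine ⟨x, fun i j hj p hp q hq => ?_⟩
  rw [show x i = sel i (fun j _ => x j) from wellFounded_lt.fix_eq sel i]
  exact hsel i (fun j _ => x j) p hp j hj q hq

theorem exists_separated_translates {ι G : Type u} [Group G] {Δ : G → G → ℝ}
    (hsymm : ∀ a b, Δ a b = Δ b a) (F : ι → Finset G) (hbig : ℵ₀ ≤ deltaFlat Δ)
    (hι : #ι ≤ deltaFlat Δ) :
    ∃ x : ι → G, Pairwise fun i j => ∀ p ∈ F i, ∀ q ∈ F j, 1 < Δ (p * x i) (q * x j) := by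
  obtain ⟨e⟩ : Nonempty (ι ↪ (deltaFlat Δ).ord.ToType) := by rwa [← le_def, mk_ord_toType]
  let _ : LinearOrder ι := LinearOrder.lift' e e.injective
  have : WellFoundedLT ι := ⟨InvImage.wf e wellFounded_lt⟩
  have hsmall : ∀ i : ι, #(Iio i) < deltaFlat Δ := fun i =>
    (mk_preimage_of_injective e (Iio (e i)) e.injective).trans_lt
      (by simpa using mk_Iio_lt (e i))
  obtain ⟨x, hx⟩ := exists_separated_translates_of_wellFoundedLT F hbig hsmall
  refine ⟨x, fun i j hij p hp q hq => ?_⟩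
  rcases hij.lt_or_gt with h | h
  · exact hx j i h q hq p hp
  · exact hsymm .. ▸ hx i j h p hp q hq

theorem exists_mem_BLip_forall_eqOn_rtrans {ι G : Type u} [Group G] {Δ : G → G → ℝ}
    (hΔ : IsPseudometric Δ) (hinv : RightInvariant Δ) {g : ι → G → ℝ}
    (hg : ∀ i, g i ∈ BLip Δ) (F : ι → Finset G) {x : ι → G}
    (hx : Pairwise fun i j => ∀ p ∈ F i, ∀ q ∈ F j, 1 < Δ (p * x i) (q * x j)) :
    ∃ f ∈ BLip Δ, ∀ i, EqOn (rtrans (x i) f) (g i) (F i) := by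
  have hlip : ∀ k l : Σ i, F i, |g k.1 k.2 - g l.1 l.2| ≤ Δ (k.2 * x k.1) (l.2 * x l.1) := by
    rintro ⟨i, p, hp⟩ ⟨j, q, hq⟩
    rcases eq_or_ne i j with rfl | hij
    · exact hinv p q (x i) ▸ (hg i).2 p q
    · have hsep := hx hij p hp q hq
      have hgp := (hg i).1 p
      have hgq := (hg j).1 q
      rw [abs_le]
      constructor <;> linarith
  obtain ⟨f, hf, hfa⟩ := exists_mem_BLip_comp_eq hΔ _ _ (fun k => (hg k.1).1 k.2) hlip
  exact ⟨f, hf, fun i p hp => congrFun hfa ⟨i, p, hp⟩⟩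

theorem orbit_meets_open_family_general {G : Type u} [Group G] [TopologicalSpace G]
    (Δ : G → G → ℝ) (hΔ : IsCRIP Δ)
    (hbig : Cardinal.aleph0 ≤ deltaFlat Δ)
    (𝒪 : Set (Set (G → ℝ)))
    (hopen : ∀ U ∈ 𝒪, U.Nonempty ∧ ∃ V : Set (G → ℝ), IsOpen V ∧ U = V ∩ BLip Δ)
    (hcard : Cardinal.mk 𝒪 ≤ deltaFlat Δ) :
    ∃ f ∈ BLip Δ, ∀ U ∈ 𝒪, ∃ x : G, rtrans x f ∈ U := by
  obtain ⟨hpseudo, hinv, -⟩ := hΔ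
  have hlocal : ∀ U : 𝒪, ∃ g ∈ BLip Δ, ∃ F : Finset G,
      ∀ h ∈ BLip Δ, EqOn h g F → h ∈ (U : Set (G → ℝ)) := by
    rintro ⟨U, hU⟩
    obtain ⟨⟨g, hgU⟩, V, hV, rfl⟩ := hopen U hU
    obtain ⟨F, hF⟩ := hV.exists_finset_forall_eqOn_mem hgU.1
    exact ⟨g, hgU.2, F, fun h hh hhg => ⟨hF h hhg, hh⟩⟩
  choose g hg F hF using hlocal
  obtain ⟨x, hx⟩ := exists_separated_translates hpseudo.2.1 F hbig hcard
  obtain ⟨f, hf, hfg⟩ := exists_mem_BLip_forall_eqOn_rtrans hpseudo hinv hg F hx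
  exact ⟨f, hf, fun U hU => ⟨x ⟨U, hU⟩, hF ⟨U, hU⟩ _ (rtrans_mem_BLip hinv hf _) (hfg _)⟩⟩

/-- if `Δ♭(Δ) ≥ ℵ₀` and `𝒪` is a family of at most `Δ♭(Δ)` nonempty
relatively open subsets of `BLip⁺(Δ)`, then some `f ∈ BLip⁺(Δ)` has orbit meeting
every member of `𝒪`. -/
theorem orbit_meets_open_family {G : Type u} [Group G] [TopologicalSpace G]
    [IsTopologicalGroup G] (Δ : G → G → ℝ) (hΔ : IsCRIP Δ)
    (hbig : Cardinal.aleph0 ≤ deltaFlat Δ)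
    (𝒪 : Set (Set (G → ℝ)))
    (hopen : ∀ U ∈ 𝒪, U.Nonempty ∧ ∃ V : Set (G → ℝ), IsOpen V ∧ U = V ∩ BLip Δ)
    (hcard : Cardinal.mk 𝒪 ≤ deltaFlat Δ) :
    ∃ f ∈ BLip Δ, ∀ U ∈ 𝒪, ∃ x : G, rtrans x f ∈ U :=
  orbit_meets_open_family_general Δ hΔ hbig 𝒪 hopen hcard
end
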